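/- arXiv:2101.10389 — 9 statements merged into one kernel-verified Lean document; each statement's English description precedes it below -/
import Mathlib

section
/- Let C be a pointed category with finite limits, (f : A → B, g : C → A) a generalized point, and x : X → B a pullback-stable regular epimorphism. Form the pullbacks A ×_B X (of f, x) and C ×_B X (of f∘g, x) with induced map g×1 : C ×_B X → A ×_B X and projection π₂ : A ×_B X → X. If ker(π₂) (the kernel of π₂) and g×1 are jointly strongly epimorphic, then ker(f) and g are jointly strongly epimorphic. -/
open CategoryTheory CategoryTheory.Limits

universe u v

/-- A pullback-stable regular epimorphism. -/
def PStableRegEpi {𝒞 : Type u} [Category.{v} 𝒞] [HasFiniteLimits 𝒞] {A B : 𝒞}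
    (f : A ⟶ B) : Prop :=
  Nonempty (RegularEpi f) ∧
    ∀ (X : 𝒞) (x : X ⟶ B), Nonempty (RegularEpi (pullback.snd f x))

/-- Two morphisms into `A` are jointly strongly epimorphic if every monomorphism
into `A` through which both factor is an isomorphism. -/
def JointlyStronglyEpi {𝒞 : Type u} [Category.{v} 𝒞] {A K L : 𝒞}
    (k : K ⟶ A) (g : L ⟶ A) : Prop :=
  ∀ (M : 𝒞) (m : M ⟶ A), Mono m → (∃ u : K ⟶ M, u ≫ m = k) →
    (∃ v : L ⟶ M, v ≫ m = g) → IsIso m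

/-!
Pull a monomorphism `m : M ⟶ A` through which `ker f` and `g` factor back along the
strong epimorphism `π₁ : A ×_B X ⟶ A`. Both `ker π₂` and `g × 1` factor through the pulled-back
monomorphism, which is therefore an isomorphism; hence `π₁` factors through `m`, so `m` is a
strong epimorphism as well as a monomorphism, i.e. an isomorphism.
-/

section

variable {𝒞 : Type u} [Category.{v} 𝒞]

lemma strongEpi_pullback_fst_of_pStableRegEpi [HasFiniteLimits 𝒞] {A B X : 𝒞}
    (f : A ⟶ B) {x : X ⟶ B} (hx : PStableRegEpi x) : StrongEpi (pullback.fst f x) := by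
  obtain ⟨hre⟩ := hx.2 A f
  have : IsRegularEpi (pullback.snd x f) := isRegularEpi_of_regularEpi hre
  rw [← pullbackSymmetry_hom_comp_snd f x]
  infer_instance

lemma isIso_of_isIso_pullback_fst {P A M : 𝒞} (p : P ⟶ A) [StrongEpi p] (m : M ⟶ A) [Mono m]
    [HasPullback p m] [IsIso (pullback.fst p m)] : IsIso m := by
  have hp : (inv (pullback.fst p m) ≫ pullback.snd p m) ≫ m = p := by
    rw [Category.assoc, ← pullback.condition, IsIso.inv_hom_id_assoc]
  have : StrongEpi ((inv (pullback.fst p m) ≫ pullback.snd p m) ≫ m) := by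
    rw [hp]
    infer_instance
  have : StrongEpi m := strongEpi_of_strongEpi (inv (pullback.fst p m) ≫ pullback.snd p m) m
  exact isIso_of_mono_of_strongEpi m

lemma JointlyStronglyEpi.of_strongEpi_cover [HasPullbacks 𝒞] {P A K L K' L' : 𝒞}
    {k : K ⟶ A} {g : L ⟶ A} (p : P ⟶ A) [StrongEpi p] {k' : K' ⟶ P} {g' : L' ⟶ P}
    (h : JointlyStronglyEpi k' g') (a : K' ⟶ K) (ha : k' ≫ p = a ≫ k)
    (b : L' ⟶ L) (hb : g' ≫ p = b ≫ g) : JointlyStronglyEpi k g := by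
  rintro M m hm ⟨u, rfl⟩ ⟨v, rfl⟩
  have : IsIso (pullback.fst p m) := by
    refine h _ _ inferInstance ⟨pullback.lift k' (a ≫ u) ?_, pullback.lift_fst _ _ _⟩
      ⟨pullback.lift g' (b ≫ v) ?_, pullback.lift_fst _ _ _⟩
    · rw [ha, Category.assoc]
    · rw [hb, Category.assoc]
  exact isIso_of_isIso_pullback_fst p m

end

/-- If in the pulled-back generalized point `(π₂, g×1)` along a pullback-stable
regular epimorphism `x`, `ker π₂` and `g×1` are jointly strongly epimorphic,
then `ker f` and `g` are jointly strongly epimorphic. -/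
theorem stmt2 {𝒞 : Type u} [Category.{v} 𝒞] [HasFiniteLimits 𝒞]
    [HasZeroMorphisms 𝒞]
    {A B C X : 𝒞} (f : A ⟶ B) (g : C ⟶ A) (x : X ⟶ B)
    (hx : PStableRegEpi x)
    (hjse : JointlyStronglyEpi (kernel.ι (pullback.snd f x))
      (pullback.map (g ≫ f) x f x g (𝟙 X) (𝟙 B) (by simp) (by simp))) :
    JointlyStronglyEpi (kernel.ι f) g := by
  have := strongEpi_pullback_fst_of_pStableRegEpi f hx
  have hker : (kernel.ι (pullback.snd f x) ≫ pullback.fst f x) ≫ f = 0 := by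
    rw [Category.assoc, pullback.condition, kernel.condition_assoc, zero_comp]
  exact hjse.of_strongEpi_cover (pullback.fst f x) (kernel.lift f _ hker)
    (kernel.lift_ι _ _ _).symm (pullback.fst (g ≫ f) x) (pullback.lift_fst _ _ _)
end

section
/- Let C be a pointed category with finite limits, (f : A → B, g : C → A) a generalized point. Form the pullback A ×_B C of f and f∘g with projections π₁, π₂, and the induced morphism ⟨g, 1_C⟩ : C → A ×_B C. If ⟨g, 1_C⟩ and ker(π₂) are jointly strongly epimorphic, then (f, g) is a strong generalized point (i.e., g and ker(f) are jointly strongly epimorphic). -/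
/-! Pull a monomorphism `m` through which `ker f` and `g` factor back along the
projection `π₁ : A ×_B C ⟶ A`. Both `ker π₂` and `⟨g, 1_C⟩` factor through the pulled-back
monomorphism, which is therefore an isomorphism, so `π₁` factors through `m`. Since `π₁` is a
pullback of the regular epimorphism `g ≫ f`, it is a strong epimorphism, and hence so is `m`. -/

open CategoryTheory CategoryTheory.Limits

universe u v

section

variable {𝒞 : Type u} [Category.{v} 𝒞]

theorem PStableRegEpi.strongEpi_pullback_fst [HasFiniteLimits 𝒞] {X Y B : 𝒞} {h : X ⟶ B}
    (hh : PStableRegEpi h) (x : Y ⟶ B) : StrongEpi (pullback.fst x h) := by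
  obtain ⟨hreg⟩ := hh.2 Y x
  have : IsRegularEpi (pullback.snd h x) := ⟨⟨hreg⟩⟩
  rw [← pullbackSymmetry_hom_comp_snd]
  infer_instance

theorem isIso_of_mono_of_strongEpi_factors {M A P : 𝒞} (m : M ⟶ A) [Mono m] (p : P ⟶ A)
    [StrongEpi p] (t : P ⟶ M) (ht : t ≫ m = p) : IsIso m := by
  have : StrongEpi (t ≫ m) := ht ▸ inferInstance
  have : StrongEpi m := strongEpi_of_strongEpi t m
  exact isIso_of_mono_of_strongEpi m

theorem JointlyStronglyEpi.of_strongEpi_comp [HasPullbacks 𝒞] {A P K L K' L' : 𝒞}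
    {k : K ⟶ A} {g : L ⟶ A} {k' : K' ⟶ P} {g' : L' ⟶ P} (h : JointlyStronglyEpi k' g')
    (p : P ⟶ A) [StrongEpi p] (a : K' ⟶ K) (ha : k' ≫ p = a ≫ k) (b : L' ⟶ L)
    (hb : g' ≫ p = b ≫ g) : JointlyStronglyEpi k g := by
  rintro M m hm ⟨u, hu⟩ ⟨v, hv⟩
  have hk' : ∃ w, w ≫ pullback.snd m p = k' :=
    ⟨pullback.lift (a ≫ u) k' (by rw [Category.assoc, hu, ha]), pullback.lift_snd _ _ _⟩
  have hg' : ∃ w, w ≫ pullback.snd m p = g' :=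
    ⟨pullback.lift (b ≫ v) g' (by rw [Category.assoc, hv, hb]), pullback.lift_snd _ _ _⟩
  have : IsIso (pullback.snd m p) := h _ _ inferInstance hk' hg'
  exact isIso_of_mono_of_strongEpi_factors m p (inv (pullback.snd m p) ≫ pullback.fst m p)
    (by rw [Category.assoc, pullback.condition, IsIso.inv_hom_id_assoc])

end

/-- If `⟨g, 1_C⟩` and `ker π₂` are jointly strongly epimorphic for the pullback
`A ×_B C` of `f` and `f ∘ g`, then `(f, g)` is a strong generalized point. -/
theorem stmt4 {𝒞 : Type u} [Category.{v} 𝒞] [HasFiniteLimits 𝒞]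
    [HasZeroMorphisms 𝒞]
    {A B C : 𝒞} (f : A ⟶ B) (g : C ⟶ A)
    (hgp : PStableRegEpi (g ≫ f))
    (hjse : JointlyStronglyEpi (kernel.ι (pullback.snd f (g ≫ f)))
      (pullback.lift g (𝟙 C) (by simp))) :
    JointlyStronglyEpi (kernel.ι f) g := by
  have := hgp.strongEpi_pullback_fst f
  have hker : (kernel.ι (pullback.snd f (g ≫ f)) ≫ pullback.fst f (g ≫ f)) ≫ f = 0 := by
    rw [Category.assoc, pullback.condition, kernel.condition_assoc, zero_comp]
  exact hjse.of_strongEpi_comp (pullback.fst f (g ≫ f)) (kernel.lift f _ hker)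
    (kernel.lift_ι _ _ _).symm (𝟙 C) (by rw [pullback.lift_fst, Category.id_comp])
end

section
/- In the category of monoids, every Schreier generalized point is strong: if (f : A → B, g : C → A) is a generalized point such that for every a ∈ A and c ∈ C with f(a) = f(g(c)) there is a unique k ∈ ker f with a = k + g(c), then the images of g and of the kernel inclusion ker(f) → A together generate A; more precisely, any submonoid M of A containing g(C) and ker(f) equals A. -/
open Function

/-- `a` is a representative of `b` for `f`. -/
def IsRep {A B : Type*} [AddMonoid A] [AddMonoid B] (f : A →+ B) (a : A) (b : B) : Prop :=
  f a = b ∧ ∀ a', f a' = b → ∃! k, f k = 0 ∧ a' = k + a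

/-- A (split) Schreier point. -/
def SchreierPoint {E D : Type*} [AddMonoid E] [AddMonoid D] (p : E →+ D) (s : D →+ E) : Prop :=
  ∀ e, ∃! k, p k = 0 ∧ e = k + s (p e)

/-- A Schreier generalized point. -/
def SchreierGP {A B C : Type*} [AddMonoid A] [AddMonoid B] [AddMonoid C]
    (f : A →+ B) (g : C →+ A) : Prop :=
  Surjective (f.comp g) ∧ ∀ a c, f a = f (g c) → ∃! k, f k = 0 ∧ a = k + g c

/-- The pullback of `f : A →+ B` and `h : C →+ B`, as a submonoid of `A × C`. -/
def pbk {A B C : Type*} [AddMonoid A] [AddMonoid B] [AddMonoid C]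
    (f : A →+ B) (h : C →+ B) : AddSubmonoid (A × C) where
  carrier := {p | f p.1 = h p.2}
  zero_mem' := by simp
  add_mem' := by
    intro p q hp hq
    simp only [Set.mem_setOf_eq, Prod.fst_add, Prod.snd_add, map_add] at *
    rw [hp, hq]

/-- The second projection `A ×_B C →+ C`. -/
def proj2 {A B C : Type*} [AddMonoid A] [AddMonoid B] [AddMonoid C]
    (f : A →+ B) (h : C →+ B) : (pbk f h) →+ C :=
  (AddMonoidHom.snd A C).comp (pbk f h).subtype

/-- The induced morphism `⟨g, 1_C⟩ : C →+ A ×_B C`. -/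
def liftg {A B C : Type*} [AddMonoid A] [AddMonoid B] [AddMonoid C]
    (f : A →+ B) (g : C →+ A) : C →+ (pbk f (f.comp g)) :=
  AddMonoidHom.codRestrict (g.prod (AddMonoidHom.id C)) (pbk f (f.comp g)) (fun _ => rfl)

theorem SchreierGP.exists_eq_ker_add {A B C : Type*} [AddMonoid A] [AddMonoid B] [AddMonoid C]
    {f : A →+ B} {g : C →+ A} (h : SchreierGP f g) (a : A) :
    ∃ k c, f k = 0 ∧ a = k + g c := by
  obtain ⟨c, hc⟩ := h.1 (f a)
  obtain ⟨k, ⟨hk, hak⟩, -⟩ := h.2 a c hc.symm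
  exact ⟨k, c, hk, hak⟩

/-- Every Schreier generalized point of monoids is strong: any submonoid of `A`
containing the image of `g` and the kernel of `f` is all of `A`. -/
theorem stmt6 {A B C : Type*} [AddMonoid A] [AddMonoid B] [AddMonoid C]
    (f : A →+ B) (g : C →+ A) (hgp : SchreierGP f g) :
    ∀ M : AddSubmonoid A, (∀ c, g c ∈ M) → (∀ a, f a = 0 → a ∈ M) → M = ⊤ := by
  intro M hg hk
  refine eq_top_iff.2 fun a _ => ?_
  obtain ⟨k, c, hk0, rfl⟩ := hgp.exists_eq_ker_add a
  exact M.add_mem (hk k hk0) (hg c)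
end

section
/- Let f : A → B and g : C → A be monoid homomorphisms with f ∘ g surjective. Then (f, g) is a Schreier generalized point if and only if the split point (π₂ : A ×_B C → C, ⟨g, 1_C⟩ : C → A ×_B C) is a Schreier point, where A ×_B C = {(a,c) | f(a) = f(g(c))}. -/
/-! The kernel of `π₂ : A ×_B C → C` consists of the pairs `(k, 0)` with `f k = 0`, and
`(a, c) = (k, 0) + (g c, c)` holds in `A ×_B C` exactly when `a = k + g c`. So `k ↦ (k, 0)`
matches the unique decompositions demanded of the split point with those demanded of `(f, g)`. -/

open Function

theorem existsUnique_subtype_iff {α : Type*} {p q : α → Prop} :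
    (∃! a : {a // p a}, q a) ↔ ∃! a, p a ∧ q a := by
  simp only [ExistsUnique, Subtype.exists, Subtype.forall, Subtype.mk.injEq, and_imp]
  exact ⟨fun ⟨a, hp, hq, h⟩ ↦ ⟨a, ⟨hp, hq⟩, h⟩, fun ⟨a, ⟨hp, hq⟩, h⟩ ↦ ⟨a, hp, hq, h⟩⟩

section Pullback

variable {A B C : Type*} [AddMonoid A] [AddMonoid B] [AddMonoid C]

@[simp]
theorem mem_pbk {f : A →+ B} {h : C →+ B} {x : A × C} : x ∈ pbk f h ↔ f x.1 = h x.2 :=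
  Iff.rfl

@[simp]
theorem proj2_apply (f : A →+ B) (h : C →+ B) (x : pbk f h) : proj2 f h x = (x : A × C).2 :=
  rfl

@[simp]
theorem coe_liftg (f : A →+ B) (g : C →+ A) (c : C) : (liftg f g c : A × C) = (g c, c) :=
  rfl

theorem fst_mem_ker_of_proj2_eq_zero {f : A →+ B} {h : C →+ B} {k : pbk f h}
    (hk : proj2 f h k = 0) : f (k : A × C).1 = 0 := by
  have hk_mem : f (k : A × C).1 = h (k : A × C).2 := k.2
  rwa [← proj2_apply, hk, map_zero] at hk_mem

def kerProj2Equiv (f : A →+ B) (h : C →+ B) :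
    {k : pbk f h // proj2 f h k = 0} ≃ {a : A // f a = 0} where
  toFun k := ⟨(k.1 : A × C).1, fst_mem_ker_of_proj2_eq_zero k.2⟩
  invFun a := ⟨⟨(a.1, 0), by simpa using a.2⟩, rfl⟩
  left_inv k := by
    ext
    · rfl
    · exact k.2.symm
  right_inv _ := rfl

theorem eq_add_liftg_proj2_iff (f : A →+ B) (g : C →+ A) (x : pbk f (f.comp g))
    {k : pbk f (f.comp g)} (hk : proj2 f (f.comp g) k = 0) :
    x = k + liftg f g (proj2 f (f.comp g) x) ↔ (x : A × C).1 = (k : A × C).1 + g (x : A × C).2 := by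
  rw [proj2_apply] at hk
  simp [Subtype.ext_iff, Prod.ext_iff, hk]

theorem schreierPoint_proj2_liftg_iff (f : A →+ B) (g : C →+ A) :
    SchreierPoint (proj2 f (f.comp g)) (liftg f g) ↔
      ∀ a c, f a = f (g c) → ∃! k, f k = 0 ∧ a = k + g c := by
  simp only [SchreierPoint, Subtype.forall, Prod.forall, mem_pbk, AddMonoidHom.coe_comp,
    comp_apply]
  refine forall₂_congr fun a c ↦ forall_congr' fun hac ↦ ?_
  rw [← existsUnique_subtype_iff, ← existsUnique_subtype_iff]
  exact (kerProj2Equiv f (f.comp g)).existsUnique_congr fun k ↦ eq_add_liftg_proj2_iff f g _ k.2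

end Pullback

/-- `(f, g)` is a Schreier generalized point iff the split point `(π₂, ⟨g,1⟩)`
is a Schreier point. -/
theorem stmt7 {A B C : Type*} [AddMonoid A] [AddMonoid B] [AddMonoid C]
    (f : A →+ B) (g : C →+ A) (hsurj : Surjective (f.comp g)) :
    SchreierGP f g ↔ SchreierPoint (proj2 f (f.comp g)) (liftg f g) := by
  rw [SchreierGP, schreierPoint_proj2_liftg_iff, and_iff_right hsurj]
end

section
/- Let f : A → B be a surjective monoid homomorphism and suppose a ∈ A is a representative of b ∈ B (i.e., f(a) = b and for all a' with f(a') = b there is a unique k ∈ ker f with a' = k + a). Then any other representative of b yields the same uniqueness property: if a₁ is also a representative of b and a' is a representative of b', then a₁ + a' is a representative of b + b' whenever a + a' is. -/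
open Function

namespace IsRep

variable {A B : Type*} [AddMonoid A] [AddMonoid B] {f : A →+ B} {a : A} {b : B}

theorem iff_forall_exists_and_cancel :
    IsRep f a b ↔ f a = b ∧ (∀ a', f a' = b → ∃ k, f k = 0 ∧ a' = k + a) ∧
      ∀ ⦃k k'⦄, f k = 0 → f k' = 0 → k + a = k' + a → k = k' := by
  constructor
  · rintro ⟨hfa, hfib⟩
    refine ⟨hfa, fun a' ha' => (hfib a' ha').exists, fun k k' hk hk' heq => ?_⟩
    exact (hfib (k + a) (by rw [map_add, hk, hfa, zero_add])).unique ⟨hk, rfl⟩ ⟨hk', heq⟩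
  · rintro ⟨hfa, hcover, hcancel⟩
    refine ⟨hfa, fun a' ha' => ?_⟩
    obtain ⟨k, hk, rfl⟩ := hcover a' ha'
    exact ⟨k, ⟨hk, rfl⟩, fun k' ⟨hk', heq⟩ => hcancel hk' hk heq.symm⟩

theorem exists_eq_add (h : IsRep f a b) {a' : A} (ha' : f a' = b) :
    ∃ k, f k = 0 ∧ a' = k + a :=
  (iff_forall_exists_and_cancel.1 h).2.1 a' ha'

theorem cancel (h : IsRep f a b) {k k' : A} (hk : f k = 0) (hk' : f k' = 0)
    (heq : k + a = k' + a) : k = k' :=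
  (iff_forall_exists_and_cancel.1 h).2.2 hk hk' heq

theorem add_replace_left {a₁ a' : A} {c : B} (ha : IsRep f a b) (ha₁ : IsRep f a₁ b)
    (hsum : IsRep f (a + a') c) : IsRep f (a₁ + a') c := by
  obtain ⟨k₀, hk₀, rfl⟩ := ha.exists_eq_add ha₁.1
  refine iff_forall_exists_and_cancel.2 ⟨?_, fun a'' ha'' => ?_, fun m m' hm hm' heq => ?_⟩
  · rw [← hsum.1, map_add, map_add, map_add, hk₀, zero_add]
  · obtain ⟨k, hk, rfl⟩ := hsum.exists_eq_add ha''
    obtain ⟨m, hm, hkm⟩ := ha₁.exists_eq_add (a' := k + a) (by rw [map_add, hk, ha.1, zero_add])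
    exact ⟨m, hm, by rw [← add_assoc, hkm, add_assoc]⟩
  -- `a₁ = k₀ + a`: cancel `a + a'` first, then `a₁`.
  · have hshift : m + k₀ = m' + k₀ :=
      hsum.cancel (by rw [map_add, hm, hk₀, zero_add]) (by rw [map_add, hm', hk₀, zero_add])
        (by simpa only [add_assoc] using heq)
    exact ha₁.cancel hm hm' (by rw [← add_assoc, hshift, add_assoc])

end IsRep

theorem stmt9_general {A B : Type*} [AddMonoid A] [AddMonoid B] (f : A →+ B)
    {a a₁ a' : A} {b b' : B}
    (ha : IsRep f a b) (ha₁ : IsRep f a₁ b)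
    (hsum : IsRep f (a + a') (b + b')) : IsRep f (a₁ + a') (b + b') :=
  ha.add_replace_left ha₁ hsum

/-- Replacement of representatives: if `a` and `a₁` both represent `b`, `a'`
represents `b'`, and `a + a'` represents `b + b'`, then so does `a₁ + a'`. -/
theorem stmt9 {A B : Type*} [AddMonoid A] [AddMonoid B] (f : A →+ B)
    (hf : Surjective f) {a a₁ a' : A} {b b' : B}
    (ha : IsRep f a b) (ha₁ : IsRep f a₁ b) (ha' : IsRep f a' b')
    (hsum : IsRep f (a + a') (b + b')) : IsRep f (a₁ + a') (b + b') :=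
  stmt9_general f ha ha₁ hsum
end

section
/- If (f : A → B, g : C → A) is a Schreier generalized point of monoids, then f is a regular Schreier epimorphism: every b ∈ B has a representative, and the set of all representatives of elements of B is a submonoid of A. -/
open Function

/-! Every `g c` is a representative of `f (g c)`, and any two representatives of the same `b`
differ by a unit of `ker f`; conversely translating a representative on either side by a unit of
`ker f` gives a representative. So a sum of representatives `a + (u' + g c')` can be rewritten,
via the representative `a + u'` of `f (g c)`, as `w + g (c + c')` with `w` a kernel unit, which
is a representative of the sum. -/

theorem AddUnits.map_neg_eq_zero {A B : Type*} [AddMonoid A] [AddMonoid B] (f : A →+ B)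
    {u : AddUnits A} (hu : f u = 0) : f ↑(-u) = 0 := by
  calc f ↑(-u) = f ↑(-u) + f u := by rw [hu, add_zero]
    _ = 0 := by rw [← map_add, AddUnits.neg_add, map_zero]

namespace IsRep

variable {A B : Type*} [AddMonoid A] [AddMonoid B] {f : A →+ B} {a a' : A} {b : B}

theorem zero (f : A →+ B) : IsRep f 0 0 :=
  ⟨map_zero f, fun a' ha' =>
    ⟨a', ⟨ha', (add_zero a').symm⟩, fun _ ⟨_, h⟩ => (add_zero _).symm.trans h.symm⟩⟩

theorem eq_zero_of_eq_add (ha : IsRep f a b) {k : A} (hk : f k = 0) (h : a = k + a) : k = 0 :=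
  (ha.2 a ha.1).unique ⟨hk, h⟩ ⟨map_zero f, (zero_add a).symm⟩

theorem addUnit_add (ha : IsRep f a b) {u : AddUnits A} (hu : f u = 0) : IsRep f (u + a) b := by
  refine ⟨by rw [map_add, hu, zero_add, ha.1], fun a' ha' => ?_⟩
  obtain ⟨k, ⟨hk, rfl⟩, hk_unique⟩ := ha.2 a' ha'
  refine ⟨k + ↑(-u), ⟨?_, ?_⟩, ?_⟩
  · rw [map_add, hk, AddUnits.map_neg_eq_zero f hu, add_zero]
  · rw [add_assoc, AddUnits.neg_add_cancel_left]
  · rintro m ⟨hm, hm_eq⟩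
    rw [← hk_unique (m + u) ⟨by rw [map_add, hm, hu, add_zero], by rw [hm_eq, add_assoc]⟩,
      AddUnits.add_neg_cancel_right]

theorem add_addUnit (ha : IsRep f a b) {u : AddUnits A} (hu : f u = 0) : IsRep f (a + u) b := by
  refine ⟨by rw [map_add, hu, add_zero, ha.1], fun a' ha' => ?_⟩
  have hfa' : f (a' + ↑(-u)) = b := by rw [map_add, AddUnits.map_neg_eq_zero f hu, add_zero, ha']
  obtain ⟨k, ⟨hk, hk_eq⟩, hk_unique⟩ := ha.2 _ hfa'
  refine ⟨k, ⟨hk, ?_⟩, fun m ⟨hm, hm_eq⟩ => hk_unique m ⟨hm, ?_⟩⟩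
  · rw [← add_assoc, ← hk_eq, AddUnits.neg_add_cancel_right]
  · rw [hm_eq, add_assoc, AddUnits.add_neg_cancel_right]

theorem exists_addUnit_add_eq (ha : IsRep f a b) (ha' : IsRep f a' b) :
    ∃ u : AddUnits A, f u = 0 ∧ a' = u + a := by
  obtain ⟨k, ⟨hk, hk_eq⟩, -⟩ := ha.2 a' ha'.1
  obtain ⟨l, ⟨hl, hl_eq⟩, -⟩ := ha'.2 a ha.1
  have hlk : l + k = 0 :=
    ha.eq_zero_of_eq_add (by rw [map_add, hl, hk, add_zero]) (by rw [add_assoc, ← hk_eq, hl_eq])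
  have hkl : k + l = 0 :=
    ha'.eq_zero_of_eq_add (by rw [map_add, hl, hk, add_zero]) (by rw [add_assoc, ← hl_eq, hk_eq])
  exact ⟨⟨k, l, hkl, hlk⟩, hk, hk_eq⟩

end IsRep

namespace SchreierGP

variable {A B C : Type*} [AddMonoid A] [AddMonoid B] [AddMonoid C] {f : A →+ B} {g : C →+ A}

theorem isRep (hgp : SchreierGP f g) {c : C} {b : B} (hc : f (g c) = b) : IsRep f (g c) b := by
  subst hc
  exact ⟨rfl, fun a' ha' => hgp.2 a' c ha'⟩

theorem exists_isRep (hgp : SchreierGP f g) (b : B) : ∃ a, IsRep f a b :=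
  let ⟨c, hc⟩ := hgp.1 b
  ⟨g c, hgp.isRep hc⟩

theorem isRep_add (hgp : SchreierGP f g) {a a' : A} {b b' : B} (ha : IsRep f a b)
    (ha' : IsRep f a' b') : IsRep f (a + a') (b + b') := by
  obtain ⟨c, hc⟩ := hgp.1 b
  obtain ⟨c', hc'⟩ := hgp.1 b'
  obtain ⟨u', hu', rfl⟩ := (hgp.isRep hc').exists_addUnit_add_eq ha'
  obtain ⟨w, hw, hw_eq⟩ := (hgp.isRep hc).exists_addUnit_add_eq (ha.add_addUnit hu')
  have hsum : IsRep f (g (c + c')) (b + b') :=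
    hgp.isRep (by rw [map_add, map_add]; exact congrArg₂ (· + ·) hc hc')
  have h_eq : a + (u' + g c') = w + g (c + c') := by
    rw [← add_assoc, hw_eq, map_add, add_assoc]
  exact h_eq ▸ hsum.addUnit_add hw

def representatives (hgp : SchreierGP f g) : AddSubmonoid A where
  carrier := {a | ∃ b, IsRep f a b}
  zero_mem' := ⟨0, IsRep.zero f⟩
  add_mem' := fun ⟨b, ha⟩ ⟨b', ha'⟩ => ⟨b + b', hgp.isRep_add ha ha'⟩

end SchreierGP

/-- If `(f, g)` is a Schreier generalized point, then `f` is a regular Schreier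
epimorphism: every `b` has a representative and the representatives form a submonoid. -/
theorem stmt10 {A B C : Type*} [AddMonoid A] [AddMonoid B] [AddMonoid C]
    (f : A →+ B) (g : C →+ A) (hgp : SchreierGP f g) :
    (∀ b : B, ∃ a : A, IsRep f a b) ∧
    (∃ M : AddSubmonoid A, (M : Set A) = {a | ∃ b, IsRep f a b}) :=
  ⟨hgp.exists_isRep, hgp.representatives, rfl⟩
end

section
/- If f : A → B is a regular Schreier epimorphism of monoids, then there exists a monoid C (namely the free monoid on the underlying set of B) and a monoid homomorphism g : C → A such that (f, g) is a Schreier generalized point. -/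
/-!
Send each free generator `b` to a chosen representative of `b`. Since the representatives form a
submonoid, every `g c` is again a representative (of `f (g c)`), and that is exactly the
uniqueness condition of a Schreier generalized point.
-/

open Function

theorem FreeAddMonoid.lift_apply_mem {α M : Type*} [AddMonoid M] {S : AddSubmonoid M}
    {r : α → M} (hr : ∀ x, r x ∈ S) (c : FreeAddMonoid α) : FreeAddMonoid.lift r c ∈ S := by
  have hc : FreeAddMonoid.lift r c ∈ AddMonoidHom.mrange (FreeAddMonoid.lift r) := ⟨c, rfl⟩
  rw [FreeAddMonoid.mrange_lift] at hc
  exact (AddSubmonoid.closure_le.mpr (Set.range_subset_iff.mpr hr)) hc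

theorem schreierGP_of_isRep {A B C : Type*} [AddMonoid A] [AddMonoid B] [AddMonoid C]
    {f : A →+ B} {g : C →+ A} (hsurj : Surjective (f.comp g))
    (hrep : ∀ c, IsRep f (g c) (f (g c))) : SchreierGP f g :=
  ⟨hsurj, fun a c hac => (hrep c).2 a hac⟩

theorem stmt11_general {A B : Type*} [AddMonoid A] [AddMonoid B] (f : A →+ B)
    (hrep : ∀ b : B, ∃ a : A, IsRep f a b)
    (hsub : ∃ M : AddSubmonoid A, (M : Set A) = {a | ∃ b, IsRep f a b}) :
    ∃ g : FreeAddMonoid B →+ A, SchreierGP f g := by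
  choose r hr using hrep
  obtain ⟨M, hM⟩ := hsub
  have hrM : ∀ b, r b ∈ M := fun b => by
    rw [← SetLike.mem_coe, hM]
    exact ⟨b, hr b⟩
  refine ⟨FreeAddMonoid.lift r, schreierGP_of_isRep (fun b => ⟨FreeAddMonoid.of b, ?_⟩) ?_⟩
  · exact (hr b).1
  · intro c
    have hc := FreeAddMonoid.lift_apply_mem hrM c
    rw [← SetLike.mem_coe, hM] at hc
    obtain ⟨b, hb⟩ := hc
    rwa [hb.1]

/-- If `f` is a regular Schreier epimorphism, then there is a homomorphism `g` from
the free monoid on `B` to `A` making `(f, g)` a Schreier generalized point. -/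
theorem stmt11 {A B : Type*} [AddMonoid A] [AddMonoid B] (f : A →+ B)
    (hf : Surjective f) (hrep : ∀ b : B, ∃ a : A, IsRep f a b)
    (hsub : ∃ M : AddSubmonoid A, (M : Set A) = {a | ∃ b, IsRep f a b}) :
    ∃ g : FreeAddMonoid B →+ A, SchreierGP f g :=
  stmt11_general f hrep hsub
end

section
/- Let f : A → B and g : C → A be monoid homomorphisms with f∘g surjective, and let π₂ : A ×_B C → C be the second projection of the pullback of f and f∘g, with splitting ⟨g,1_C⟩. Then (f, g) is a Schreier generalized point if and only if the generalized point (π₂, ⟨g,1_C⟩) (whose composite is 1_C) is a Schreier generalized point. -/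
open Function

section Pullback

variable {A B C : Type*} [AddMonoid A] [AddMonoid B] [AddMonoid C] (f : A →+ B) (g : C →+ A)

theorem proj2_comp_liftg : (proj2 f (f.comp g)).comp (liftg f g) = AddMonoidHom.id C := rfl

theorem proj2_eq_zero_iff (k : pbk f (f.comp g)) :
    proj2 f (f.comp g) k = 0 ↔ f (k : A × C).1 = 0 ∧ (k : A × C).2 = 0 := by
  have hk : f (k : A × C).1 = f (g (k : A × C).2) := k.2
  refine ⟨fun h0 => ⟨?_, h0⟩, fun h => h.2⟩
  rw [hk, show (k : A × C).2 = 0 from h0, map_zero, map_zero]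

theorem eq_add_liftg_iff (x k : pbk f (f.comp g)) (c : C) :
    x = k + liftg f g c ↔ (x : A × C).1 = (k : A × C).1 + g c ∧ (x : A × C).2 = (k : A × C).2 + c :=
  Subtype.ext_iff.trans Prod.ext_iff

/-- The kernel of `π₂` is `ker f × {0}`, and `(a, c) = (k, 0) + (g c, c)` says exactly `a = k + g c`. -/
theorem existsUnique_ker_proj2_iff {a : A} {c : C} (h : f a = f.comp g c) :
    (∃! k, proj2 f (f.comp g) k = 0 ∧ (⟨(a, c), h⟩ : pbk f (f.comp g)) = k + liftg f g c) ↔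
      ∃! k, f k = 0 ∧ a = k + g c := by
  have key : ∀ k : pbk f (f.comp g),
      (proj2 f (f.comp g) k = 0 ∧ (⟨(a, c), h⟩ : pbk f (f.comp g)) = k + liftg f g c) ↔
        (k : A × C).2 = 0 ∧ (f (k : A × C).1 = 0 ∧ a = (k : A × C).1 + g c) := by
    intro k
    rw [proj2_eq_zero_iff, eq_add_liftg_iff]
    constructor
    · rintro ⟨⟨hk1, hk2⟩, ha, -⟩
      exact ⟨hk2, hk1, ha⟩
    · rintro ⟨hk2, hk1, ha⟩
      exact ⟨⟨hk1, hk2⟩, ha, by simp [hk2]⟩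
  rw [existsUnique_congr key]
  exact Equiv.existsUnique_subtype_congr
    { toFun := fun k => ⟨(k.1 : A × C).1, k.2.2⟩
      invFun := fun k => ⟨⟨(k.1, 0), by simp [pbk, k.2.1]⟩, rfl, k.2⟩
      left_inv := fun k => by ext <;> simp [k.2.1]
      right_inv := fun k => rfl }

theorem schreierGP_proj2_liftg_iff :
    SchreierGP (proj2 f (f.comp g)) (liftg f g) ↔
      ∀ a c, f a = f (g c) → ∃! k, f k = 0 ∧ a = k + g c := by
  rw [SchreierGP, proj2_comp_liftg]
  refine ⟨fun h a c hac => (existsUnique_ker_proj2_iff f g hac).1 (h.2 ⟨(a, c), hac⟩ c rfl),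
    fun h => ⟨surjective_id, ?_⟩⟩
  rintro ⟨⟨a, c⟩, hac⟩ c' rfl
  exact (existsUnique_ker_proj2_iff f g hac).2 (h a c hac)

end Pullback

/-- `(f, g)` is a Schreier generalized point iff the generalized point
`(π₂, ⟨g,1⟩)` (whose composite is the identity) is a Schreier generalized point. -/
theorem stmt16 {A B C : Type*} [AddMonoid A] [AddMonoid B] [AddMonoid C]
    (f : A →+ B) (g : C →+ A) (hsurj : Surjective (f.comp g)) :
    SchreierGP f g ↔ SchreierGP (proj2 f (f.comp g)) (liftg f g) := by
  rw [schreierGP_proj2_liftg_iff, SchreierGP, and_iff_right hsurj]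
end

section
/- Every Schreier point of monoids is a strong point: if (f : A → B, s : B → A) satisfies f∘s = id_B and every a ∈ A is uniquely k + s(f(a)) with k ∈ ker f, then any submonoid M of A containing s(B) and ker f equals A. -/
open Function

theorem stmt17_general {A B : Type*} [AddMonoid A] [AddMonoid B] (f : A →+ B) (s : B →+ A)
    (hsch : SchreierPoint f s) :
    ∀ M : AddSubmonoid A, (∀ b, s b ∈ M) → (∀ a, f a = 0 → a ∈ M) → M = ⊤ := by
  intro M hs hk
  refine eq_top_iff.2 fun a _ => ?_
  obtain ⟨k, ⟨hk0, hak⟩, -⟩ := hsch a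
  exact hak ▸ M.add_mem (hk k hk0) (hs (f a))

/-- Every Schreier point of monoids is strong: any submonoid of `A` containing
`s(B)` and `ker f` is all of `A`. -/
theorem stmt17 {A B : Type*} [AddMonoid A] [AddMonoid B] (f : A →+ B) (s : B →+ A)
    (hfs : ∀ b, f (s b) = b) (hsch : SchreierPoint f s) :
    ∀ M : AddSubmonoid A, (∀ b, s b ∈ M) → (∀ a, f a = 0 → a ∈ M) → M = ⊤ :=
  stmt17_general f s hsch
end
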